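/- arXiv:1304.4407 — 2 statements merged into one kernel-verified Lean document; each statement's English description precedes it below -/
import Mathlib

section
/- Let λ > 0 and y ∈ ℝ^M, and let x⋆ be a minimizer of problem (P). Suppose the norm A is decomposable at L* x⋆ with data (T, e), and set S := T⊥. Assume the source condition SC(x⋆) holds with (η, α) and that A*(P_S α) < 1, and assume Φ is injective on ker(L_S*), i.e. ker(Φ) ∩ ker(P_S ∘ L*) = {0}. Then x⋆ is the unique minimizer of (P). -/
/-! Two minimizers `x`, `x⋆` have the same image under `Φ` by strict convexity of the data term,
hence the same value of `R`. For `h = x - x⋆` the source condition gives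
`⟪α, L* h⟫ = ⟪η, Φ h⟫ = 0`. Every `e + v` with `v ∈ S`, `A*(v) ≤ 1` is a subgradient of `A` at
`L* x⋆`; testing them against `L* h` and taking the supremum in decomposability (ii) yields
`A(P_S L* h) ≤ A*(P_S α) A(P_S L* h)`, so `P_S L* h = 0` as `A*(P_S α) < 1`, and injectivity of `Φ`
on `ker (P_S ∘ L*)` gives `h = 0`. -/

open RealInnerProductSpace

noncomputable section

abbrev Euc (n : ℕ) := EuclideanSpace ℝ (Fin n)

def proj {n : ℕ} (V : Submodule ℝ (Euc n)) : Euc n →L[ℝ] Euc n :=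
  V.subtypeL.comp (V.orthogonalProjection)

def dualNorm {n : ℕ} (A : Euc n → ℝ) (α : Euc n) : ℝ :=
  sSup {r : ℝ | ∃ v : Euc n, A v ≤ 1 ∧ r = ⟪α, v⟫}

def subdiff {n : ℕ} (f : Euc n → ℝ) (x : Euc n) : Set (Euc n) :=
  {g : Euc n | ∀ y : Euc n, f x + ⟪g, y - x⟫ ≤ f y}

def IsNorm {n : ℕ} (A : Euc n → ℝ) : Prop :=
  (∀ x, A x = 0 ↔ x = 0) ∧ (∀ (c : ℝ) (x : Euc n), A (c • x) = |c| * A x) ∧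
    (∀ x y, A (x + y) ≤ A x + A y)

def Decomposable {n : ℕ} (A : Euc n → ℝ) (u : Euc n) (T : Submodule ℝ (Euc n)) (e : Euc n) :
    Prop :=
  e ∈ T ∧
  subdiff A u = {α : Euc n | proj T α = e ∧ dualNorm A (proj Tᗮ α) ≤ 1} ∧
  ∀ z : Euc n, z ∈ Tᗮ →
    A z = sSup {r : ℝ | ∃ v ∈ (Tᗮ : Submodule ℝ (Euc n)), dualNorm A v ≤ 1 ∧ r = ⟪v, z⟫}

def obj {N M P : ℕ} (Φ : Euc N →L[ℝ] Euc M) (L : Euc P →L[ℝ] Euc N) (A : Euc P → ℝ)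
    (y : Euc M) (lam : ℝ) (x : Euc N) : ℝ :=
  (1/2) * ‖y - Φ x‖^2 + lam * A (ContinuousLinearMap.adjoint L x)

def SC {N M P : ℕ} (Φ : Euc N →L[ℝ] Euc M) (L : Euc P →L[ℝ] Euc N) (A : Euc P → ℝ)
    (x : Euc N) (η : Euc M) (α : Euc P) : Prop :=
  α ∈ subdiff A (ContinuousLinearMap.adjoint L x) ∧
  ContinuousLinearMap.adjoint Φ η = L α ∧
  L α ∈ subdiff (fun z => A (ContinuousLinearMap.adjoint L z)) x

def breg {n : ℕ} (A : Euc n → ℝ) (α u u₀ : Euc n) : ℝ :=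
  A u - A u₀ - ⟪α, u - u₀⟫

open ContinuousLinearMap

lemma Seminorm.exists_pos_mul_norm_le {E : Type*} [NormedAddCommGroup E] [NormedSpace ℝ E]
    [FiniteDimensional ℝ E] (p : Seminorm ℝ E) (hp : ∀ x, p x = 0 → x = 0) :
    ∃ m > 0, ∀ x, m * ‖x‖ ≤ p x := by
  rcases subsingleton_or_nontrivial E with hE | hE
  · exact ⟨1, one_pos, fun x => by simp [Subsingleton.elim x 0]⟩
  have hcont : Continuous p := by
    simpa [continuousOn_univ] using p.convexOn.continuousOn isOpen_univ
  obtain ⟨x₀, hx₀, hmin⟩ := (isCompact_sphere (0 : E) 1).exists_isMinOn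
    (NormedSpace.sphere_nonempty.mpr zero_le_one) hcont.continuousOn
  have hx₀ : ‖x₀‖ = 1 := by simpa using hx₀
  refine ⟨p x₀, (apply_nonneg p x₀).lt_of_ne fun h => ?_, fun x => ?_⟩
  · simp [hp x₀ h.symm] at hx₀
  rcases eq_or_ne x 0 with rfl | hx
  · simp
  have hnorm : 0 < ‖x‖ := norm_pos_iff.mpr hx
  have hsphere : ‖x‖⁻¹ • x ∈ Metric.sphere (0 : E) 1 := by
    simp [norm_smul, hnorm.ne']
  have := isMinOn_iff.mp hmin _ hsphere
  rw [map_smul_eq_mul, norm_inv, norm_norm] at this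
  rwa [le_inv_mul_iff₀ hnorm, mul_comm] at this

namespace IsNorm

variable {n : ℕ} {A : Euc n → ℝ}

def toSeminorm (hA : IsNorm A) : Seminorm ℝ (Euc n) :=
  Seminorm.of A hA.2.2 hA.2.1

lemma map_zero (hA : IsNorm A) : A 0 = 0 := (hA.1 0).mpr rfl

lemma nonneg (hA : IsNorm A) (x : Euc n) : 0 ≤ A x := apply_nonneg hA.toSeminorm x

lemma eq_zero_of_le_mul {c : ℝ} (hA : IsNorm A) {x : Euc n} (hc : c < 1) (h : A x ≤ c * A x) :
    x = 0 :=
  (hA.1 x).mp (by nlinarith [hA.nonneg x])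

lemma dualNorm_bddAbove (hA : IsNorm A) (α : Euc n) :
    BddAbove {r : ℝ | ∃ v : Euc n, A v ≤ 1 ∧ r = ⟪α, v⟫} := by
  obtain ⟨m, hm, hlow⟩ := hA.toSeminorm.exists_pos_mul_norm_le fun x => (hA.1 x).mp
  refine ⟨‖α‖ / m, ?_⟩
  rintro _ ⟨v, hv, rfl⟩
  have hnorm : ‖v‖ ≤ 1 / m := by rw [le_div_iff₀ hm, mul_comm]; exact (hlow v).trans hv
  calc ⟪α, v⟫ ≤ ‖α‖ * ‖v‖ := real_inner_le_norm α v
    _ ≤ ‖α‖ * (1 / m) := by gcongr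
    _ = ‖α‖ / m := mul_one_div _ _

lemma dualNorm_zero (hA : IsNorm A) : dualNorm A 0 = 0 := by
  have : {r : ℝ | ∃ v : Euc n, A v ≤ 1 ∧ r = ⟪(0 : Euc n), v⟫} = {0} := by
    ext r
    simp only [inner_zero_left, Set.mem_singleton_iff]
    exact ⟨fun ⟨_, _, hr⟩ => hr, fun hr => ⟨0, by simp [hA.map_zero], hr⟩⟩
  rw [dualNorm, this, csSup_singleton]

lemma inner_le_dualNorm_mul (hA : IsNorm A) (α x : Euc n) : ⟪α, x⟫ ≤ dualNorm A α * A x := by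
  rcases eq_or_ne x 0 with rfl | hx
  · simp [hA.map_zero]
  have hAx : 0 < A x := (hA.nonneg x).lt_of_ne fun h => hx ((hA.1 x).mp h.symm)
  have hunit : A ((A x)⁻¹ • x) ≤ 1 := by
    rw [hA.2.1, abs_of_pos (inv_pos.mpr hAx), inv_mul_cancel₀ hAx.ne']
  have := le_csSup (hA.dualNorm_bddAbove α) ⟨_, hunit, rfl⟩
  rwa [real_inner_smul_right, inv_mul_le_iff₀ hAx, mul_comm] at this

end IsNorm

section Projection

variable {n : ℕ} (V : Submodule ℝ (Euc n))

lemma proj_eq_starProjection : proj V = V.starProjection := rfl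

lemma inner_proj_right_of_mem {v : Euc n} (hv : v ∈ V) (z : Euc n) :
    ⟪v, proj V z⟫ = ⟪v, z⟫ := by
  rw [proj_eq_starProjection, ← Submodule.inner_starProjection_left_eq_right,
    Submodule.starProjection_eq_self_iff.mpr hv]

end Projection

namespace Decomposable

variable {n : ℕ} {A : Euc n → ℝ} {u e : Euc n} {T : Submodule ℝ (Euc n)}

lemma proj_eq_of_mem_subdiff (hdec : Decomposable A u T e) {α : Euc n}
    (hα : α ∈ subdiff A u) : proj T α = e := by
  rw [hdec.2.1] at hα
  exact hα.1

lemma add_mem_subdiff (hdec : Decomposable A u T e) {v : Euc n} (hv : v ∈ Tᗮ)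
    (hv₁ : dualNorm A v ≤ 1) : e + v ∈ subdiff A u := by
  rw [hdec.2.1]
  refine ⟨?_, ?_⟩
  · rw [map_add, proj_eq_starProjection, Submodule.starProjection_eq_self_iff.mpr hdec.1,
      (Submodule.starProjection_apply_eq_zero_iff _).mpr hv, add_zero]
  · rwa [map_add, proj_eq_starProjection,
      (Submodule.starProjection_apply_eq_zero_iff _).mpr (T.le_orthogonal_orthogonal hdec.1),
      Submodule.starProjection_eq_self_iff.mpr hv, zero_add]

lemma apply_le_of_forall_inner_le (hA : IsNorm A) (hdec : Decomposable A u T e) {z : Euc n}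
    (hz : z ∈ Tᗮ) {c : ℝ} (h : ∀ v ∈ Tᗮ, dualNorm A v ≤ 1 → ⟪v, z⟫ ≤ c) : A z ≤ c := by
  rw [hdec.2.2 z hz]
  refine csSup_le ⟨_, 0, Tᗮ.zero_mem, by rw [hA.dualNorm_zero]; exact zero_le_one, rfl⟩ ?_
  rintro _ ⟨v, hv, hv₁, rfl⟩
  exact h v hv hv₁

lemma proj_orthogonal_eq_zero (hA : IsNorm A) (hdec : Decomposable A u T e) {α w : Euc n}
    (hα : α ∈ subdiff A u) (hsat : dualNorm A (proj Tᗮ α) < 1) (hw : A (u + w) ≤ A u)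
    (hαw : ⟪α, w⟫ = 0) : proj Tᗮ w = 0 := by
  have he : e = α - proj Tᗮ α := by
    rw [← hdec.proj_eq_of_mem_subdiff hα, proj_eq_starProjection, proj_eq_starProjection,
      Submodule.starProjection_orthogonal_val, sub_sub_cancel]
  have hinner : ∀ v ∈ Tᗮ, dualNorm A v ≤ 1 → ⟪v, proj Tᗮ w⟫ ≤ ⟪proj Tᗮ α, w⟫ := by
    intro v hv hv₁
    have := hdec.add_mem_subdiff hv hv₁ (u + w)
    rw [add_sub_cancel_left, he, inner_add_left, inner_sub_left, hαw] at this
    rw [inner_proj_right_of_mem _ hv]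
    linarith
  refine hA.eq_zero_of_le_mul hsat ?_
  calc A (proj Tᗮ w) ≤ ⟪proj Tᗮ α, w⟫ :=
        hdec.apply_le_of_forall_inner_le hA (Submodule.starProjection_apply_mem _ w) hinner
    _ = ⟪proj Tᗮ α, proj Tᗮ w⟫ :=
        (inner_proj_right_of_mem _ (Submodule.starProjection_apply_mem _ α) w).symm
    _ ≤ dualNorm A (proj Tᗮ α) * A (proj Tᗮ w) := hA.inner_le_dualNorm_mul _ _

end Decomposable

section Objective

variable {N M P : ℕ} {Φ : Euc N →L[ℝ] Euc M} {L : Euc P →L[ℝ] Euc N} {A : Euc P → ℝ}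
  {y : Euc M} {lam : ℝ}

lemma obj_midpoint_add_le (hA : IsNorm A) (hlam : 0 ≤ lam) (x x' : Euc N) :
    obj Φ L A y lam ((2 : ℝ)⁻¹ • (x + x')) + ‖Φ (x - x')‖ ^ 2 / 8 ≤
      (obj Φ L A y lam x + obj Φ L A y lam x') / 2 := by
  have hquad : ‖y - Φ ((2 : ℝ)⁻¹ • (x + x'))‖ ^ 2 + ‖Φ (x - x')‖ ^ 2 / 4 =
      (‖y - Φ x‖ ^ 2 + ‖y - Φ x'‖ ^ 2) / 2 := by
    have hmid : y - Φ ((2 : ℝ)⁻¹ • (x + x')) = (2 : ℝ)⁻¹ • ((y - Φ x) + (y - Φ x')) := by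
      rw [map_smul, map_add]; module
    have hdiff : ‖Φ (x - x')‖ = ‖(y - Φ x) - (y - Φ x')‖ := by
      rw [map_sub, sub_sub_sub_cancel_left, norm_sub_rev]
    have hhalf : ‖(2 : ℝ)⁻¹‖ ^ 2 = 1 / 4 := by norm_num
    rw [hmid, hdiff, norm_smul, mul_pow, hhalf]
    linarith [parallelogram_law_with_norm ℝ (y - Φ x) (y - Φ x')]
  have hreg : A (adjoint L ((2 : ℝ)⁻¹ • (x + x'))) ≤ (A (adjoint L x) + A (adjoint L x')) / 2 := by
    rw [map_smul, map_add, smul_add]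
    refine (hA.2.2 _ _).trans_eq ?_
    rw [hA.2.1, hA.2.1, abs_of_pos (by norm_num)]
    ring
  unfold obj
  nlinarith [mul_le_mul_of_nonneg_left hreg hlam]

lemma map_eq_of_isMinimizer (hA : IsNorm A) (hlam : 0 ≤ lam) {x x' : Euc N}
    (hx : ∀ z, obj Φ L A y lam x ≤ obj Φ L A y lam z)
    (hx' : ∀ z, obj Φ L A y lam x' ≤ obj Φ L A y lam z) : Φ x = Φ x' := by
  have := obj_midpoint_add_le (Φ := Φ) (L := L) (y := y) hA hlam x x'
  have hsq : ‖Φ (x - x')‖ ^ 2 ≤ 0 := by linarith [hx ((2 : ℝ)⁻¹ • (x + x')), hx x', hx' x]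
  rw [← sub_eq_zero, ← map_sub, ← norm_eq_zero]
  exact pow_eq_zero_iff two_ne_zero |>.mp (le_antisymm hsq (sq_nonneg _))

lemma apply_adjoint_eq_of_obj_eq (hlam : lam ≠ 0) {x x' : Euc N}
    (h : obj Φ L A y lam x = obj Φ L A y lam x') (hΦ : Φ x = Φ x') : A (adjoint L x) = A (adjoint L x') := by
  unfold obj at h
  rw [hΦ, add_right_inj] at h
  exact mul_left_cancel₀ hlam h

end Objective

lemma SC.inner_adjoint_eq_zero {N M P : ℕ} {Φ : Euc N →L[ℝ] Euc M} {L : Euc P →L[ℝ] Euc N}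
    {A : Euc P → ℝ} {x : Euc N} {η : Euc M} {α : Euc P} (hSC : SC Φ L A x η α) {h : Euc N}
    (hh : Φ h = 0) : ⟪α, adjoint L h⟫ = 0 := by
  rw [ContinuousLinearMap.adjoint_inner_right, ← hSC.2.1,
    ContinuousLinearMap.adjoint_inner_left, hh, inner_zero_right]

theorem stmt1 {N M P : ℕ} (Φ : Euc N →L[ℝ] Euc M) (L : Euc P →L[ℝ] Euc N)
    (A : Euc P → ℝ) (hA : IsNorm A) (lam : ℝ) (hlam : 0 < lam) (y : Euc M)
    (xs : Euc N) (hmin : ∀ x, obj Φ L A y lam xs ≤ obj Φ L A y lam x)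
    (T : Submodule ℝ (Euc P)) (e : Euc P)
    (hdec : Decomposable A (ContinuousLinearMap.adjoint L xs) T e)
    (η : Euc M) (α : Euc P) (hSC : SC Φ L A xs η α)
    (hsat : dualNorm A (proj Tᗮ α) < 1)
    (hinj : ∀ h : Euc N, Φ h = 0 → proj Tᗮ (ContinuousLinearMap.adjoint L h) = 0 → h = 0) :
    ∀ x : Euc N, (∀ z, obj Φ L A y lam x ≤ obj Φ L A y lam z) → x = xs := by
  intro x hx
  have hΦ : Φ x = Φ xs := map_eq_of_isMinimizer hA hlam.le hx hmin
  have hR : A (adjoint L x) = A (adjoint L xs) :=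
    apply_adjoint_eq_of_obj_eq hlam.ne' ((hx xs).antisymm (hmin x)) hΦ
  have hker : Φ (x - xs) = 0 := by rw [map_sub, hΦ, sub_self]
  have hS : proj Tᗮ (adjoint L (x - xs)) = 0 :=
    hdec.proj_orthogonal_eq_zero hA hSC.1 hsat (by rw [map_sub, add_sub_cancel, hR])
      (hSC.inner_adjoint_eq_zero hker)
  exact sub_eq_zero.mp (hinj _ hker hS)
end
end

section
/- Fix x₀ ∈ ℝ^N, ε > 0, c > 0, and w ∈ ℝ^M with ‖w‖₂ ≤ ε; set y := Φ x₀ + w and λ := c ε. Suppose the source condition SC(x₀) holds with (η, α). Then every minimizer x⋆ of problem (P) satisfies D_α(L* x⋆, L* x₀) ≤ ε (1 + c‖η‖₂/2)² / c. -/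
open RealInnerProductSpace

noncomputable section

/-! Testing the minimality of `x⋆` along the segment towards `x₀` (where the regulariser is
convex) gives `λ (R x⋆ - R x₀) ≤ ⟪r, d⟫` for `d = Φ (x⋆ - x₀)` and the residual `r = w - d`.
The source condition turns `⟪α, L* (x⋆ - x₀)⟫` into `⟪η, d⟫`, hence
`λ D ≤ ⟪(w - λ η) - d, d⟫ ≤ ‖w - λ η‖² / 4 ≤ ε² (1 + c ‖η‖)² / 4`. -/

open Set Filter Topology

section InnerProductSpace

variable {E F : Type*} [NormedAddCommGroup E] [InnerProductSpace ℝ E]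
  [NormedAddCommGroup F] [InnerProductSpace ℝ F]

theorem inner_sub_self_le_norm_sq_div_four (v d : F) : ⟪v - d, d⟫ ≤ ‖v‖ ^ 2 / 4 := by
  have h := sq_nonneg ‖v - (2 : ℝ) • d‖
  rw [norm_sub_sq_real, real_inner_smul_right, norm_smul, Real.norm_two] at h
  rw [inner_sub_left, real_inner_self_eq_norm_sq]
  linarith

theorem inner_residual_le_of_forall_le {Φ : E →ₗ[ℝ] F} {g : E → ℝ} (hg : ConvexOn ℝ univ g)
    {y : F} {xs : E} (hmin : ∀ x, 1/2 * ‖y - Φ xs‖ ^ 2 + g xs ≤ 1/2 * ‖y - Φ x‖ ^ 2 + g x)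
    (x : E) : ⟪y - Φ xs, Φ (x - xs)⟫ ≤ g x - g xs := by
  set r := y - Φ xs
  set d := Φ (x - xs)
  have hstep : ∀ t : ℝ, 0 < t → t ≤ 1 → ⟪r, d⟫ ≤ g x - g xs + t * (‖d‖ ^ 2 / 2) := by
    intro t ht0 ht1
    have hconv : g (xs + t • (x - xs)) ≤ (1 - t) * g xs + t * g x := by
      have hseg : (1 - t) • xs + t • x = xs + t • (x - xs) := by module
      simpa only [hseg, smul_eq_mul] using
        hg.2 (mem_univ xs) (mem_univ x) (sub_nonneg.2 ht1) ht0.le (sub_add_cancel 1 t)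
    have hres : y - Φ (xs + t • (x - xs)) = r - t • d := by
      simp only [r, d, map_add, map_smul]
      abel
    have hnorm : ‖r - t • d‖ ^ 2 = ‖r‖ ^ 2 - 2 * t * ⟪r, d⟫ + t ^ 2 * ‖d‖ ^ 2 := by
      rw [norm_sub_sq_real, real_inner_smul_right, norm_smul, mul_pow, Real.norm_eq_abs, sq_abs]
      ring
    have hcmp := hmin (xs + t • (x - xs))
    rw [hres, hnorm] at hcmp
    have hscaled : t * ⟪r, d⟫ ≤ t * (g x - g xs + t * (‖d‖ ^ 2 / 2)) := by nlinarith
    exact le_of_mul_le_mul_left hscaled ht0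
  have hlim : Tendsto (fun t : ℝ ↦ g x - g xs + t * (‖d‖ ^ 2 / 2)) (𝓝[>] 0) (𝓝 (g x - g xs)) :=
    tendsto_nhdsWithin_of_tendsto_nhds <| (by fun_prop : Continuous _).tendsto' _ _ (by simp)
  refine ge_of_tendsto hlim ?_
  filter_upwards [Ioo_mem_nhdsGT one_pos] with t ht using hstep t ht.1 ht.2.le

theorem mul_bregman_le_of_forall_le {Φ : E →ₗ[ℝ] F} {R : E → ℝ} (hR : ConvexOn ℝ univ R)
    {lam : ℝ} (hlam : 0 ≤ lam) {x₀ xs : E} {w : F} (η : F)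
    (hmin : ∀ x, 1/2 * ‖Φ x₀ + w - Φ xs‖ ^ 2 + lam * R xs ≤
      1/2 * ‖Φ x₀ + w - Φ x‖ ^ 2 + lam * R x) :
    lam * (R xs - R x₀ - ⟪η, Φ (xs - x₀)⟫) ≤ ‖w - lam • η‖ ^ 2 / 4 := by
  set d := Φ (xs - x₀)
  have hopt := inner_residual_le_of_forall_le (hR.smul hlam) hmin x₀
  have hres : Φ x₀ + w - Φ xs = w - d := by simp only [d, map_sub]; abel
  have hdir : Φ (x₀ - xs) = -d := by simp only [d, map_sub, neg_sub]
  rw [hres, hdir, inner_neg_right, smul_eq_mul, smul_eq_mul] at hopt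
  calc lam * (R xs - R x₀ - ⟪η, d⟫) ≤ ⟪w - d, d⟫ - ⟪lam • η, d⟫ := by
        rw [real_inner_smul_left]; linarith
    _ = ⟪(w - lam • η) - d, d⟫ := by rw [← inner_sub_left]; congr 1; abel
    _ ≤ ‖w - lam • η‖ ^ 2 / 4 := inner_sub_self_le_norm_sq_div_four _ _

end InnerProductSpace

theorem IsNorm.convexOn {n : ℕ} {A : Euc n → ℝ} (hA : IsNorm A) : ConvexOn ℝ univ A :=
  (Seminorm.of (𝕜 := ℝ) A hA.2.2 hA.2.1).convexOn

theorem stmt3 {N M P : ℕ} (Φ : Euc N →L[ℝ] Euc M) (L : Euc P →L[ℝ] Euc N)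
    (A : Euc P → ℝ) (hA : IsNorm A) (x₀ : Euc N)
    (ε c : ℝ) (hε : 0 < ε) (hc : 0 < c) (w : Euc M) (hw : ‖w‖ ≤ ε)
    (η : Euc M) (α : Euc P) (hSC : SC Φ L A x₀ η α)
    (xs : Euc N)
    (hmin : ∀ x, obj Φ L A (Φ x₀ + w) (c * ε) xs ≤ obj Φ L A (Φ x₀ + w) (c * ε) x) :
    breg A α (ContinuousLinearMap.adjoint L xs) (ContinuousLinearMap.adjoint L x₀) ≤ ε * (1 + c * ‖η‖ / 2) ^ 2 / c := by
  set Lstar := ContinuousLinearMap.adjoint L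
  have hR : ConvexOn ℝ univ (A ∘ Lstar) := hA.convexOn.comp_linearMap Lstar.toLinearMap
  have hbreg : breg A α (Lstar xs) (Lstar x₀) =
      A (Lstar xs) - A (Lstar x₀) - ⟪η, Φ (xs - x₀)⟫ := by
    rw [breg, ← map_sub, ContinuousLinearMap.adjoint_inner_right, ← hSC.2.1,
      ContinuousLinearMap.adjoint_inner_left]
  have hkey := mul_bregman_le_of_forall_le (Φ := Φ.toLinearMap) hR (by positivity) η hmin
  simp only [Function.comp_apply, ContinuousLinearMap.coe_coe] at hkey
  have hnoise : ‖w - (c * ε) • η‖ ≤ ε * (1 + c * ‖η‖) := by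
    calc ‖w - (c * ε) • η‖ ≤ ‖w‖ + ‖(c * ε) • η‖ := norm_sub_le _ _
      _ ≤ ε * (1 + c * ‖η‖) := by
        rw [norm_smul, Real.norm_of_nonneg (by positivity)]; nlinarith
  rw [hbreg, le_div_iff₀ hc]
  refine le_of_mul_le_mul_left ?_ hε
  calc ε * ((A (Lstar xs) - A (Lstar x₀) - ⟪η, Φ (xs - x₀)⟫) * c)
      ≤ ‖w - (c * ε) • η‖ ^ 2 / 4 := by linarith
    _ ≤ (ε * (1 + c * ‖η‖)) ^ 2 / 4 := by gcongr
    _ ≤ ε * (ε * (1 + c * ‖η‖ / 2) ^ 2) := by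
      nlinarith [sq_nonneg ε, mul_nonneg (sq_nonneg ε) (mul_nonneg hc.le (norm_nonneg η))]
end
end
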